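/- Let G = C3 be the triangle with vertices v1, v2, v3. Then hn(G) = 3 but ohn(G→C4) = 2; in particular {v_{1,2}, v3} is a hull set of G→C4. -/

import Mathlib

variable {V : Type*}

/-- A directed walk from `u` to `v` given as its list of vertices. -/
def DiwalkFrom (A : V → V → Prop) (u v : V) (l : List V) : Prop :=
  l.Chain' A ∧ l.head? = some u ∧ l.getLast? = some v

/-- A `(u,v)`-geodesic: a directed walk of minimum length (hence a shortest directed path). -/
def IsGeodesic (A : V → V → Prop) (u v : V) (l : List V) : Prop :=
  DiwalkFrom A u v l ∧ ∀ l', DiwalkFrom A u v l' → l.length ≤ l'.length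

/-- The interval `I(S)`: `S` together with all vertices on geodesics between members of `S`. -/
def geoInterval (A : V → V → Prop) (S : Set V) : Set V :=
  S ∪ {w | ∃ u ∈ S, ∃ v ∈ S, ∃ l, IsGeodesic A u v l ∧ w ∈ l}

def GeoConvex (A : V → V → Prop) (S : Set V) : Prop := geoInterval A S = S

/-- The geodesic convex hull of `S`. -/
def geoHull (A : V → V → Prop) (S : Set V) : Set V := ⋂₀ {T | S ⊆ T ∧ GeoConvex A T}

def IsHullSet (A : V → V → Prop) (S : Set V) : Prop := geoHull A S = Set.univ

def IsGeodeticSet (A : V → V → Prop) (S : Set V) : Prop := geoInterval A S = Set.univ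

noncomputable def hullNumber (A : V → V → Prop) : ℕ :=
  sInf {n | ∃ S : Set V, S.Finite ∧ S.ncard = n ∧ IsHullSet A S}

noncomputable def geodeticNumber (A : V → V → Prop) : ℕ :=
  sInf {n | ∃ S : Set V, S.Finite ∧ S.ncard = n ∧ IsGeodeticSet A S}

def IsSource (A : V → V → Prop) (v : V) : Prop := ∀ u, ¬ A u v
def IsSink (A : V → V → Prop) (v : V) : Prop := ∀ w, ¬ A v w
def IsTransitiveVtx (A : V → V → Prop) (v : V) : Prop :=
  (∃ u, A u v) ∧ (∃ w, A v w) ∧ ∀ u w, A u v → A v w → A u w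
def IsExtremeVtx (A : V → V → Prop) (v : V) : Prop :=
  IsSource A v ∨ IsSink A v ∨ IsTransitiveVtx A v

/-- An oriented graph: an asymmetric (hence irreflexive) arc relation. -/
def Oriented (A : V → V → Prop) : Prop := ∀ u v, A u v → ¬ A v u

/-- Directed distance, `⊤` if there is no directed walk. -/
noncomputable def ddist (A : V → V → Prop) (u v : V) : ℕ∞ :=
  sInf {n : ℕ∞ | ∃ l, DiwalkFrom A u v l ∧ (l.length : ℕ∞) = n + 1}


/-- Vertex set of `G→C4`: original vertices plus one vertex `v_{i,j}` per ordered adjacent pair. -/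
abbrev oC4V {V : Type*} (G : SimpleGraph V) := V ⊕ {p : V × V // G.Adj p.1 p.2}

/-- `G→C4`: each edge `v_i v_j` of `G` replaced by the directed 4-cycle
`(v_i, v_{i,j}, v_j, v_{j,i})`. -/
def oC4 {V : Type*} (G : SimpleGraph V) : oC4V G → oC4V G → Prop
  | Sum.inl i, Sum.inr p => i = p.1.1
  | Sum.inr p, Sum.inl j => j = p.1.2
  | _, _ => False

/-! Every subset of a complete graph is geodesically convex, so the only hull set of `K₃` is
its whole vertex set. In `G→C4` arcs alternate between original vertices `v_i` and new vertices
`v_{i,j}`, so the parity of a walk's length is determined by its endpoints. Hence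
`v_{0,1} v_1 v_{1,2} v_2` and `v_2 v_{2,0} v_0 v_{0,1}` are geodesics, and a convex set containing
`v_{0,1}` and `v_2` contains every `v_i`, hence every `v_{i,j}`, which lies on the geodesic
`v_i v_{i,j} v_j`. Subsingletons are convex, so no smaller hull set exists. -/

namespace DiwalkFrom

variable {A : V → V → Prop} {u v : V} {l : List V}

lemma singleton (u : V) : DiwalkFrom A u u [u] :=
  ⟨List.IsChain.singleton u, rfl, rfl⟩

lemma pair (h : A u v) : DiwalkFrom A u v [u, v] :=
  ⟨List.IsChain.cons_cons h (List.IsChain.singleton v), rfl, rfl⟩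

lemma eq_singleton_of_length_le_one (h : DiwalkFrom A u v l) (hl : l.length ≤ 1) : l = [u] := by
  match l, hl with
  | [], _ => simp [DiwalkFrom] at h
  | [a], _ => simpa using h.2.1

lemma two_le_length (h : DiwalkFrom A u v l) (hne : u ≠ v) : 2 ≤ l.length := by
  match l with
  | [] => simp [DiwalkFrom] at h
  | [a] =>
    obtain ⟨-, hu, hv⟩ := h
    simp only [List.head?_singleton, List.getLast?_singleton, Option.some_inj] at hu hv
    exact absurd (hu.symm.trans hv) hne
  | _ :: _ :: _ => simp

lemma eq_pair_of_length_eq_two (h : DiwalkFrom A u v l) (hl : l.length = 2) :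
    l = [u, v] ∧ A u v := by
  match l, hl with
  | [a, b], _ =>
    obtain ⟨hc, hu, hv⟩ := h
    simp only [List.head?_cons, List.getLast?_cons_cons, List.getLast?_singleton,
      Option.some_inj] at hu hv
    subst hu hv
    exact ⟨rfl, List.isChain_pair.mp hc⟩

end DiwalkFrom

namespace IsGeodesic

variable {A : V → V → Prop} {u v : V} {l : List V}

lemma eq_singleton (h : IsGeodesic A u u l) : l = [u] :=
  h.1.eq_singleton_of_length_le_one (by simpa using h.2 [u] (DiwalkFrom.singleton u))

lemma eq_pair (h : IsGeodesic A u v l) (huv : A u v) (hne : u ≠ v) : l = [u, v] :=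
  (h.1.eq_pair_of_length_eq_two <|
    le_antisymm (by simpa using h.2 _ (DiwalkFrom.pair huv)) (h.1.two_le_length hne)).1

end IsGeodesic

section Convexity

variable {A : V → V → Prop} {S : Set V}

lemma geoConvex_iff :
    GeoConvex A S ↔ ∀ u ∈ S, ∀ v ∈ S, ∀ l, IsGeodesic A u v l → ∀ w ∈ l, w ∈ S := by
  refine Set.union_eq_left.trans ⟨fun h u hu v hv l hl w hw => ?_, ?_⟩
  · exact h ⟨u, hu, v, hv, l, hl, hw⟩
  · rintro h w ⟨u, hu, v, hv, l, hl, hw⟩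
    exact h u hu v hv l hl w hw

lemma GeoConvex.mem_of_isGeodesic (hS : GeoConvex A S) {u v w : V} {l : List V}
    (hu : u ∈ S) (hv : v ∈ S) (hl : IsGeodesic A u v l) (hw : w ∈ l) : w ∈ S :=
  geoConvex_iff.mp hS u hu v hv l hl w hw

lemma geoConvex_of_subsingleton (hS : S.Subsingleton) : GeoConvex A S := by
  refine geoConvex_iff.mpr fun u hu v hv l hl w hw => ?_
  obtain rfl := hS hu hv
  rw [hl.eq_singleton, List.mem_singleton] at hw
  exact hw ▸ hu

lemma geoConvex_top_adj (S : Set V) : GeoConvex (⊤ : SimpleGraph V).Adj S := by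
  refine geoConvex_iff.mpr fun u hu v hv l hl w hw => ?_
  by_cases huv : u = v
  · subst huv
    rw [hl.eq_singleton, List.mem_singleton] at hw
    exact hw ▸ hu
  · rw [hl.eq_pair huv huv] at hw
    rcases List.mem_pair.mp hw with rfl | rfl <;> assumption

lemma isHullSet_iff : IsHullSet A S ↔ ∀ T, S ⊆ T → GeoConvex A T → T = Set.univ := by
  simp only [IsHullSet, geoHull, Set.sInter_eq_univ, Set.mem_ofPred_eq, and_imp]

lemma IsHullSet.eq_univ_of_geoConvex (h : IsHullSet A S) (hS : GeoConvex A S) : S = Set.univ :=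
  isHullSet_iff.mp h S subset_rfl hS

lemma IsHullSet.nontrivial [Nontrivial V] (h : IsHullSet A S) : S.Nontrivial := by
  by_contra hS
  rw [Set.not_nontrivial_iff] at hS
  have huniv := h.eq_univ_of_geoConvex (geoConvex_of_subsingleton hS)
  rw [huniv, Set.subsingleton_univ_iff] at hS
  exact not_subsingleton V hS

lemma hullNumber_eq_ncard (hfin : S.Finite) (h : IsHullSet A S)
    (hmin : ∀ T : Set V, T.Finite → IsHullSet A T → S.ncard ≤ T.ncard) :
    hullNumber A = S.ncard := by
  have hmem : S.ncard ∈ {n | ∃ T : Set V, T.Finite ∧ T.ncard = n ∧ IsHullSet A T} :=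
    ⟨S, hfin, rfl, h⟩
  refine le_antisymm (Nat.sInf_le hmem) (le_csInf ⟨_, hmem⟩ ?_)
  rintro n ⟨T, hT, rfl, hTH⟩
  exact hmin T hT hTH

lemma hullNumber_top_adj [Finite V] : hullNumber (⊤ : SimpleGraph V).Adj = Nat.card V := by
  have hH : IsHullSet (⊤ : SimpleGraph V).Adj Set.univ :=
    isHullSet_iff.mpr fun T hT _ => Set.eq_univ_of_univ_subset hT
  rw [← Set.ncard_univ, hullNumber_eq_ncard Set.finite_univ hH]
  intro T _ hTH
  rw [hTH.eq_univ_of_geoConvex (geoConvex_top_adj T)]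

lemma hullNumber_eq_two {a b : V} (hab : a ≠ b) (h : IsHullSet A {a, b}) :
    hullNumber A = 2 := by
  have : Nontrivial V := ⟨⟨a, b, hab⟩⟩
  rw [← Set.ncard_pair hab, hullNumber_eq_ncard (Set.toFinite _) h]
  intro T hT hTH
  have : Finite T := hT
  rw [Set.ncard_pair hab]
  exact Set.one_lt_ncard_iff_nontrivial.mpr hTH.nontrivial

end Convexity

section OC4

variable {G : SimpleGraph V}

lemma isLeft_eq_not_of_oC4 {x y : oC4V G} (h : oC4 G x y) : x.isLeft = !y.isLeft := by
  cases x <;> cases y <;> simp_all [oC4]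

lemma DiwalkFrom.oC4_isLeft_eq_iff {u v : oC4V G} {l : List (oC4V G)}
    (h : DiwalkFrom (oC4 G) u v l) : u.isLeft = v.isLeft ↔ l.length % 2 = 1 := by
  induction l generalizing u with
  | nil => simp [DiwalkFrom] at h
  | cons a t ih =>
    obtain ⟨hchain, hu, hv⟩ := h
    obtain rfl : a = u := by simpa using hu
    cases t with
    | nil =>
      obtain rfl : a = v := by simpa using hv
      simp
    | cons b t =>
      obtain ⟨hab, hchain⟩ := List.isChain_cons_cons.mp hchain
      have ihb := ih ⟨hchain, rfl, by simpa using hv⟩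
      simp only [isLeft_eq_not_of_oC4 hab, List.length_cons] at ihb ⊢
      have hparity : (t.length + 1 + 1) % 2 = 1 ↔ ¬(t.length + 1) % 2 = 1 := by omega
      rw [hparity, ← ihb]
      cases b.isLeft <;> cases v.isLeft <;> decide

lemma DiwalkFrom.oC4_three_le_length {u v : oC4V G} {l : List (oC4V G)}
    (h : DiwalkFrom (oC4 G) u v l) (hne : u ≠ v) (hside : u.isLeft = v.isLeft) :
    3 ≤ l.length := by
  have := h.two_le_length hne
  have := h.oC4_isLeft_eq_iff.mp hside
  omega

lemma DiwalkFrom.oC4_four_le_length {u v : oC4V G} {l : List (oC4V G)}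
    (h : DiwalkFrom (oC4 G) u v l) (hside : u.isLeft ≠ v.isLeft) (huv : ¬ oC4 G u v) :
    4 ≤ l.length := by
  have := h.two_le_length fun e => hside (congrArg _ e)
  have := mt h.oC4_isLeft_eq_iff.mpr hside
  have : l.length ≠ 2 := fun e => huv (h.eq_pair_of_length_eq_two e).2
  omega

lemma isGeodesic_oC4_inl_inl (p : {q : V × V // G.Adj q.1 q.2}) :
    IsGeodesic (oC4 G) (.inl p.1.1) (.inl p.1.2) [.inl p.1.1, .inr p, .inl p.1.2] := by
  refine ⟨⟨.cons_cons rfl (.cons_cons rfl (.singleton _)), rfl, rfl⟩, fun l hl => ?_⟩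
  exact hl.oC4_three_le_length (by simpa using p.2.ne) rfl

lemma isGeodesic_oC4_inr_inl (p : {q : V × V // G.Adj q.1 q.2}) {j : V}
    (h : G.Adj p.1.2 j) :
    IsGeodesic (oC4 G) (.inr p) (.inl j)
      [.inr p, .inl p.1.2, .inr ⟨(p.1.2, j), h⟩, .inl j] := by
  refine ⟨⟨.cons_cons rfl (.cons_cons rfl (.cons_cons rfl (.singleton _))), rfl, rfl⟩,
    fun l hl => ?_⟩
  exact hl.oC4_four_le_length (by simp) (by simpa [oC4] using h.ne.symm)

lemma isGeodesic_oC4_inl_inr (p : {q : V × V // G.Adj q.1 q.2}) {i : V}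
    (h : G.Adj i p.1.1) :
    IsGeodesic (oC4 G) (.inl i) (.inr p)
      [.inl i, .inr ⟨(i, p.1.1), h⟩, .inl p.1.1, .inr p] := by
  refine ⟨⟨.cons_cons rfl (.cons_cons rfl (.cons_cons rfl (.singleton _))), rfl, rfl⟩,
    fun l hl => ?_⟩
  exact hl.oC4_four_le_length (by simp) (by simpa [oC4] using h.ne)

lemma GeoConvex.eq_univ_of_forall_inl_mem {T : Set (oC4V G)} (hT : GeoConvex (oC4 G) T)
    (hinl : ∀ i, .inl i ∈ T) : T = Set.univ := by
  refine Set.eq_univ_of_forall fun x => ?_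
  rcases x with i | p
  · exact hinl i
  · exact hT.mem_of_isGeodesic (hinl _) (hinl _) (isGeodesic_oC4_inl_inl p) (by simp)

end OC4

lemma isHullSet_oC4_top_fin_three (h01 : (⊤ : SimpleGraph (Fin 3)).Adj 0 1) :
    IsHullSet (oC4 (⊤ : SimpleGraph (Fin 3)))
      {.inr ⟨((0 : Fin 3), (1 : Fin 3)), h01⟩, .inl 2} := by
  refine isHullSet_iff.mpr fun T hST hT => hT.eq_univ_of_forall_inl_mem ?_
  have h01T : .inr ⟨(0, 1), h01⟩ ∈ T := hST (Set.mem_insert _ _)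
  have h2T : .inl 2 ∈ T := hST (Set.mem_insert_of_mem _ rfl)
  have h12 : (⊤ : SimpleGraph (Fin 3)).Adj 1 2 := by decide
  have h20 : (⊤ : SimpleGraph (Fin 3)).Adj 2 0 := by decide
  have h1T : .inl 1 ∈ T :=
    hT.mem_of_isGeodesic h01T h2T (isGeodesic_oC4_inr_inl _ h12) (by simp)
  have h0T : .inl 0 ∈ T :=
    hT.mem_of_isGeodesic h2T h01T (isGeodesic_oC4_inl_inr _ h20) (by simp)
  intro i
  fin_cases i <;> assumption

/-- for the triangle `G = C3 = K3`, `hn(G) = 3` but `ohn(G→C4) = 2`;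
in particular `{v_{1,2}, v_3}` is a hull set of `G→C4`. -/
theorem stmt_10 (h01 : (⊤ : SimpleGraph (Fin 3)).Adj 0 1) :
    hullNumber (⊤ : SimpleGraph (Fin 3)).Adj = 3 ∧
    hullNumber (oC4 (⊤ : SimpleGraph (Fin 3))) = 2 ∧
    IsHullSet (oC4 (⊤ : SimpleGraph (Fin 3)))
      ({Sum.inr ⟨((0 : Fin 3), (1 : Fin 3)), h01⟩, Sum.inl 2} :
        Set (oC4V (⊤ : SimpleGraph (Fin 3)))) := by
  have hhull := isHullSet_oC4_top_fin_three h01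
  refine ⟨by simp [hullNumber_top_adj], hullNumber_eq_two (by simp) hhull, hhull⟩
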